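/- The class 𝒜 contains the tournaments U_3 and Δ_2, but contains none of the tournaments D_3, N, S_3. -/

import Mathlib

/-- A tournament: a finite vertex type with an orientation of each pair of
distinct vertices. -/
structure Tournament : Type 1 where
  V : Type
  [fintypeV : Fintype V]
  adj : V → V → Prop
  irrefl : ∀ v, ¬ adj v v
  total : ∀ u v, u ≠ v → adj u v ∨ adj v u
  asymm : ∀ u v, adj u v → ¬ adj v u

attribute [instance] Tournament.fintypeV

namespace Tournament

/-- A set of vertices is transitive: the induced subtournament has no directed
cycle (equivalently, the adjacency relation is transitive on it). -/
def IsTransSet (T : Tournament) (S : Set T.V) : Prop :=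
  ∀ a ∈ S, ∀ b ∈ S, ∀ c ∈ S, T.adj a b → T.adj b c → T.adj a c

/-- The chromatic number of a tournament: least number of transitive sets
partitioning the vertex set. -/
noncomputable def chromNum (T : Tournament) : ℕ :=
  sInf {k | ∃ c : T.V → Fin k, ∀ i, T.IsTransSet {v | c v = i}}

/-- `T.Contains S`: `S` is isomorphic to a subtournament of `T`. -/
def Contains (T S : Tournament) : Prop :=
  ∃ f : S.V → T.V, Function.Injective f ∧ ∀ u v, S.adj u v ↔ T.adj (f u) (f v)

/-- `T.Iso S`: `T` and `S` are isomorphic tournaments. -/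
def Iso (T S : Tournament) : Prop :=
  ∃ f : S.V → T.V, Function.Bijective f ∧ ∀ u v, S.adj u v ↔ T.adj (f u) (f v)

/-- A set of tournaments is heroic if excluding all its members bounds the
chromatic number. -/
def Heroic (H : Set Tournament) : Prop :=
  ∃ c, ∀ T : Tournament, (∀ X ∈ H, ¬ T.Contains X) → T.chromNum ≤ c

/-- A tournament is a hero if `{H}` is heroic. -/
def IsHero (H : Tournament) : Prop :=
  ∃ c, ∀ T : Tournament, ¬ T.Contains H → T.chromNum ≤ c

/-- A class of tournaments is hereditary if closed under subtournaments up to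
isomorphism. -/
def Hereditary (C : Set Tournament) : Prop :=
  ∀ T ∈ C, ∀ S : Tournament, T.Contains S → S ∈ C

def StronglyConnected (T : Tournament) : Prop :=
  ∀ u v : T.V, Relation.ReflTransGen T.adj u v

/-- A transitive tournament (no directed cycle). -/
def IsTransTour (T : Tournament) : Prop :=
  ∀ a b c : T.V, T.adj a b → T.adj b c → T.adj a c

/-- Direction rule for Δ-partitions with 0-based part-indices (a part is at an
odd position in the 1-based sense iff its 0-based index is even).
`deltaDir i j` holds iff part `i` is complete to part `j`:
for `i < j`, part `j` beats part `i` iff both positions are (1-based) odd. -/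
def deltaDir {m : ℕ} (i j : Fin m) : Prop :=
  (i < j ∧ ¬ (Even i.1 ∧ Even j.1)) ∨ (j < i ∧ (Even i.1 ∧ Even j.1))

theorem deltaDir_irrefl {m : ℕ} (i : Fin m) : ¬ deltaDir i i := by
  rintro (⟨h, _⟩ | ⟨h, _⟩) <;> exact lt_irrefl _ h

theorem deltaDir_total {m : ℕ} {i j : Fin m} (h : i ≠ j) : deltaDir i j ∨ deltaDir j i := by
  rcases lt_or_gt_of_ne h with hl | hl
  · by_cases he : Even i.1 ∧ Even j.1
    · exact Or.inr (Or.inr ⟨hl, he.2, he.1⟩)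
    · exact Or.inl (Or.inl ⟨hl, he⟩)
  · by_cases he : Even i.1 ∧ Even j.1
    · exact Or.inl (Or.inr ⟨hl, he⟩)
    · exact Or.inr (Or.inl ⟨hl, fun hc => he ⟨hc.2, hc.1⟩⟩)

theorem deltaDir_asymm {m : ℕ} {i j : Fin m} (h : deltaDir i j) : ¬ deltaDir j i := by
  rcases h with ⟨h1, h2⟩ | ⟨h1, h2⟩ <;> rintro (⟨g1, g2⟩ | ⟨g1, g2⟩)
  · exact lt_asymm h1 g1
  · exact h2 ⟨g2.2, g2.1⟩
  · exact g2 ⟨h2.2, h2.1⟩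
  · exact lt_asymm h1 g1

/-- The tournament `Δ(F 0, F 1, …, F (m-1))` given by a Δ-partition rule:
within a part use the part's edges; between parts, edges follow `deltaDir`.
For `m = 3` this is the trisection `Δ(A,B,C)` (`X ⇒ Y`, `Y ⇒ Z`, `Z ⇒ X`),
and for `m = 2` it is `F 0 ⇒ F 1`. -/
def deltaSum {m : ℕ} (F : Fin m → Tournament) : Tournament where
  V := (i : Fin m) × (F i).V
  adj x y := deltaDir x.1 y.1 ∨
    ∃ (i : Fin m) (u v : (F i).V), (F i).adj u v ∧ x = ⟨i, u⟩ ∧ y = ⟨i, v⟩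
  irrefl := by
    rintro x (h | ⟨i, u, v, hadj, rfl, h2⟩)
    · exact deltaDir_irrefl _ h
    · injection h2 with h h'
      subst h'
      exact (F i).irrefl u hadj
  total := by
    rintro ⟨i, a⟩ ⟨j, b⟩ hne
    by_cases hij : i = j
    · subst hij
      have hab : a ≠ b := fun h => hne (by rw [h])
      rcases (F i).total a b hab with h | h
      · exact Or.inl (Or.inr ⟨i, a, b, h, rfl, rfl⟩)
      · exact Or.inr (Or.inr ⟨i, b, a, h, rfl, rfl⟩)
    · rcases deltaDir_total hij with h | h
      · exact Or.inl (Or.inl h)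
      · exact Or.inr (Or.inl h)
  asymm := by
    rintro x y hxy hyx
    rcases hxy with h | ⟨i, u, v, hadj, rfl, rfl⟩
    · rcases hyx with g | ⟨j, p, q, gadj, rfl, rfl⟩
      · exact deltaDir_asymm h g
      · exact deltaDir_irrefl _ h
    · rcases hyx with g | ⟨j, p, q, gadj, h1, h2⟩
      · exact deltaDir_irrefl _ g
      · injection h1 with hij hp
        subst hij
        obtain rfl := eq_of_heq hp
        injection h2 with h h'
        subst h'
        exact (F i).asymm u v hadj gadj

/-- The one-vertex tournament `I`. -/
def oneTour : Tournament where
  V := Unit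
  adj _ _ := False
  irrefl := fun _ h => h
  total := fun u v h => (h (Subsingleton.elim u v)).elim
  asymm := fun _ _ h => h.elim

/-- The transitive tournament `L k` on `k` vertices. -/
def linTour (k : ℕ) : Tournament where
  V := Fin k
  adj i j := i < j
  irrefl := fun v => lt_irrefl v
  total := fun _ _ h => lt_or_gt_of_ne h
  asymm := fun _ _ h => lt_asymm h

/-- `Dtour n` is the tournament `D_n`: `D_1 = I`, `D_n = Δ(I, D_{n-1}, D_{n-1})`. -/
def Dtour : ℕ → Tournament
  | 0 => oneTour
  | 1 => oneTour
  | n + 2 => deltaSum ![oneTour, Dtour (n + 1), Dtour (n + 1)]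

/-- `Atour n` is the tournament `A_n`: `A_1 = I`, and `A_n` is a Δ-sum with
`2n-1` parts, the (1-based) odd positions being single vertices and the even
positions copies of `A_{n-1}`. -/
def Atour : ℕ → Tournament
  | 0 => oneTour
  | 1 => oneTour
  | n + 2 =>
      deltaSum fun t : Fin (2 * (n + 2) - 1) => if Even t.1 then oneTour else Atour (n + 1)

/-- `Utour n` is the tournament `U_n = Δ(I, I, …, I)` with `2n-1` one-vertex parts. -/
def Utour (n : ℕ) : Tournament :=
  deltaSum fun _ : Fin (2 * n - 1) => oneTour

/-- `𝒟`: the closure of `{D_n : n ≥ 1}` under subtournaments up to isomorphism. -/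
def classD : Set Tournament :=
  {T | ∃ n : ℕ, 1 ≤ n ∧ (Dtour n).Contains T}

/-- `𝒜`: the closure of `{A_n : n ≥ 1}` under subtournaments up to isomorphism. -/
def classA : Set Tournament :=
  {T | ∃ n : ℕ, 1 ≤ n ∧ (Atour n).Contains T}

/-- `Δ₂ = Δ(L₂, L₂, L₂)`. -/
def delta2 : Tournament :=
  deltaSum ![linTour 2, linTour 2, linTour 2]

/-- The tournament `N`. -/
def Ntour : Tournament where
  V := Fin 5
  adj i j :=
    ![![false, true, false, true, false],
      ![false, false, true, true, true],
      ![true, false, false, true, true],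
      ![false, false, false, false, true],
      ![true, false, false, false, false]] i j = true
  irrefl := by decide
  total := by decide
  asymm := by decide

/-- The tournament `S₃`: `v_i → v_j` iff `j - i ∈ {1, 2} (mod 5)`. -/
def Stour3 : Tournament where
  V := Fin 5
  adj i j := (j.1 + 5 - i.1) % 5 = 1 ∨ (j.1 + 5 - i.1) % 5 = 2
  irrefl := by decide
  total := by decide
  asymm := by decide

/-- A vertex `v` outside `S` is mixed on `S` if it has both an out-neighbor and
an in-neighbor in `S`. -/
def MixedOn (T : Tournament) (v : T.V) (S : Set T.V) : Prop :=
  (∃ s ∈ S, T.adj v s) ∧ (∃ s ∈ S, T.adj s v)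

/-- A homogeneous set: `1 < |S| < |V(T)|` and no vertex outside `S` is mixed on `S`. -/
def Homog (T : Tournament) (S : Set T.V) : Prop :=
  1 < S.ncard ∧ S.ncard < Nat.card T.V ∧ ∀ v ∉ S, ¬ T.MixedOn v S

/-- A prime tournament has no homogeneous set. -/
def Prime (T : Tournament) : Prop := ¬ ∃ S : Set T.V, T.Homog S

/-- `P` is a Δ-partition of `T` with parts `P 0, …, P (m-1)`:
the parts are nonempty, partition `V(T)`, and all edges between distinct parts
follow the rule `deltaDir`. -/
def IsDeltaPartition (T : Tournament) {m : ℕ} (P : Fin m → Set T.V) : Prop :=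
  (∀ i, (P i).Nonempty) ∧
  (∀ v : T.V, ∃! i, v ∈ P i) ∧
  (∀ i j, i ≠ j → ∀ u ∈ P i, ∀ v ∈ P j, (T.adj u v ↔ deltaDir i j))

/-- The induced subtournament on a set of vertices. -/
noncomputable def induce (T : Tournament) (S : Set T.V) : Tournament where
  V := ↥S
  fintypeV := (Set.toFinite S).fintype
  adj u v := T.adj u.1 v.1
  irrefl := fun v => T.irrefl v.1
  total := fun u v h => T.total u.1 v.1 (fun hh => h (Subtype.ext hh))
  asymm := fun u v h => T.asymm u.1 v.1 h

/-- `u` and `v` are joined by an edge of the backedge graph of the ordering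
given by the list `l`: the `T`-edge between them goes backwards in `l`. -/
def BackAdj (T : Tournament) (l : List T.V) (u v : T.V) : Prop :=
  (T.adj u v ∧ [v, u].Sublist l) ∨ (T.adj v u ∧ [u, v].Sublist l)

/-- The backedge graph `B_σ(T)` of the ordering `σ = l`. -/
def backGraph (T : Tournament) (l : List T.V) : SimpleGraph T.V where
  Adj u v := T.BackAdj l u v
  symm := by
    constructor
    intro u v h
    rcases h with ⟨h, s⟩ | ⟨h, s⟩
    · exact Or.inr ⟨h, s⟩
    · exact Or.inl ⟨h, s⟩
  loopless := by
    constructor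
    intro v h
    rcases h with ⟨h, _⟩ | ⟨h, _⟩ <;> exact T.irrefl v h

/-- Forest orderings: a one-element ordering is a forest ordering, and the
concatenation `l₁ ++ l₂` of two nonempty forest orderings is one provided no
two edges of the backedge graph going between `l₁` and `l₂` lie in the same
connected component of the backedge graph. -/
inductive IsForestOrdering (T : Tournament) : List T.V → Prop
  | single (v : T.V) : IsForestOrdering T [v]
  | split (l₁ l₂ : List T.V) (h₁ : l₁ ≠ []) (h₂ : l₂ ≠ [])
      (hsep : ∀ a ∈ l₁, ∀ b ∈ l₂, ∀ c ∈ l₁, ∀ d ∈ l₂,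
        T.BackAdj (l₁ ++ l₂) a b → T.BackAdj (l₁ ++ l₂) c d →
        Relation.ReflTransGen (T.BackAdj (l₁ ++ l₂)) a c → a = c ∧ b = d)
      (f₁ : IsForestOrdering T l₁) (f₂ : IsForestOrdering T l₂) :
      IsForestOrdering T (l₁ ++ l₂)

/-- A forest tournament: one admitting a forest ordering of its vertex set. -/
def IsForestTournament (T : Tournament) : Prop :=
  ∃ l : List T.V, l.Nodup ∧ (∀ v, v ∈ l) ∧ IsForestOrdering T l

/-- The set of ordered pairs realizing backedges between `l₁` and `l₂`. -/
def splitEdges (T : Tournament) (l l₁ l₂ : List T.V) : Set (T.V × T.V) :=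
  {p | p.1 ∈ l₁ ∧ p.2 ∈ l₂ ∧ T.BackAdj l p.1 p.2}

/-- The thickness of the backedge graph of `l`: the minimum number of backedges
crossing a split of `l` into two nonempty intervals. -/
noncomputable def thickness (T : Tournament) (l : List T.V) : ℕ :=
  sInf {k | ∃ l₁ l₂ : List T.V, l = l₁ ++ l₂ ∧ l₁ ≠ [] ∧ l₂ ≠ [] ∧
    k = (T.splitEdges l l₁ l₂).ncard}

/-- The "length" `|φ x - φ y|` of an unordered pair under `φ`. -/
def phiLen {α : Type} (φ : α → ℕ) : Sym2 α → ℕ :=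
  Sym2.lift ⟨fun u v => max (φ u) (φ v) - min (φ u) (φ v), fun u v => by
    show max (φ u) (φ v) - min (φ u) (φ v) = max (φ v) (φ u) - min (φ v) (φ u)
    rw [max_comm (φ u) (φ v), min_comm (φ u) (φ v)]⟩

/-- The backedge graph of the ordering `σ_φ` induced by `φ`. -/
def backGraphPhi (T : Tournament) (φ : T.V → ℕ) : SimpleGraph T.V where
  Adj u v := (T.adj u v ∧ φ v < φ u) ∨ (T.adj v u ∧ φ u < φ v)
  symm := by
    constructor
    intro u v h
    rcases h with h | h
    · exact Or.inr h
    · exact Or.inl h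
  loopless := by
    constructor
    intro v h
    rcases h with ⟨_, h⟩ | ⟨_, h⟩ <;> exact lt_irrefl _ h

/-- Two distinct edges `e`, `f` of `B_{σ_φ}(T)` are `(r,s)`-comparable under `φ`:
some path with at most `s` edges contains both, and `1/r ≤ φ(e)/φ(f) ≤ r`. -/
def Comparable (T : Tournament) (φ : T.V → ℕ) (r s : ℕ) (e f : Sym2 T.V) : Prop :=
  e ≠ f ∧
  (∃ (a b : T.V) (p : (T.backGraphPhi φ).Walk a b),
      p.IsPath ∧ p.length ≤ s ∧ e ∈ p.edges ∧ f ∈ p.edges) ∧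
  phiLen φ e ≤ r * phiLen φ f ∧ phiLen φ f ≤ r * phiLen φ e

/-- The class `𝒞_{(r,s)}`. -/
def classC (r s : ℕ) : Set Tournament :=
  {T | ∃ φ : T.V → ℕ, (∀ v, 0 < φ v) ∧ Function.Injective φ ∧
    ∀ e ∈ (T.backGraphPhi φ).edgeSet, ∀ f ∈ (T.backGraphPhi φ).edgeSet,
      ¬ Comparable T φ r s e f}

/-- `φ` is `r`-incomparable: it is an injective positive labelling such that any
two distinct edges of `B_{σ_φ}(T)` in the same connected component have length
ratio greater than `r` (or less than `1/r`). -/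
def RIncomp (T : Tournament) (φ : T.V → ℕ) (r : ℕ) : Prop :=
  (∀ v, 0 < φ v) ∧ Function.Injective φ ∧
  ∀ e ∈ (T.backGraphPhi φ).edgeSet, ∀ f ∈ (T.backGraphPhi φ).edgeSet, e ≠ f →
    (∃ a b, a ∈ e ∧ b ∈ f ∧ (T.backGraphPhi φ).Reachable a b) →
    (r * phiLen φ f < phiLen φ e ∨ r * phiLen φ e < phiLen φ f)

/-- `l` is an ordering of the vertex set of `T`. -/
def IsOrdering (T : Tournament) (l : List T.V) : Prop :=
  l.Nodup ∧ ∀ v, v ∈ l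

/-- The ordering `l` is incomparable: for every `r ≥ 1` there is an
`r`-incomparable `φ` with `σ_φ = l` (i.e. `φ` strictly increasing along `l`). -/
def IsIncompOrdering (T : Tournament) (l : List T.V) : Prop :=
  ∀ r : ℕ, 0 < r → ∃ φ : T.V → ℕ, RIncomp T φ r ∧ l.Pairwise (fun u v => φ u < φ v)

end Tournament

/-!
`U₃` is `A₃` with its two `A₂` parts shrunk to single vertices. `A₄` contains
`Δ(I, I, I, L₂, I, I, I)`, in which the vertices in the parts `6, 4 | 2, 0 | 3, 3` (counted from 0)
form `Δ₂`.

For the exclusions, embed a tournament `H` into `A_{n+1}` and record the part of its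
Δ-partition that each vertex lands in. If all vertices land in one part, `H` embeds in `A_n`.
Otherwise, if at most one vertex lands in a single-vertex part, an initial segment of parts
dominates the rest, so `H` is reducible; if at least two do, they form a "Δ-skeleton".
`D₃`, `N` and `S₃` are irreducible and have no Δ-skeleton, which is checked exhaustively.
-/

namespace Tournament

instance : Unique oneTour.V := inferInstanceAs (Unique Unit)
instance : DecidableEq oneTour.V := inferInstanceAs (DecidableEq Unit)
instance : DecidableRel oneTour.adj := fun _ _ => isFalse id
instance {k : ℕ} : DecidableEq (linTour k).V := inferInstanceAs (DecidableEq (Fin k))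
instance {k : ℕ} : DecidableRel (linTour k).adj := fun a b => Fin.decLt a b

instance {m : ℕ} (i j : Fin m) : Decidable (deltaDir i j) := by
  unfold deltaDir; infer_instance

instance deltaSumDecEq {m : ℕ} (F : Fin m → Tournament) [∀ i, DecidableEq (F i).V] :
    DecidableEq (deltaSum F).V :=
  inferInstanceAs (DecidableEq ((i : Fin m) × (F i).V))

instance deltaSumDecAdj {m : ℕ} (F : Fin m → Tournament) [∀ i, DecidableEq (F i).V]
    [∀ i, DecidableRel (F i).adj] : DecidableRel (deltaSum F).adj := fun x y =>
  have : ∀ (z : (deltaSum F).V) (i : Fin m) (u : (F i).V), Decidable (z = ⟨i, u⟩) :=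
    fun z i u => deltaSumDecEq F z ⟨i, u⟩
  inferInstanceAs (Decidable (deltaDir x.1 y.1 ∨
    ∃ (i : Fin m) (u v : (F i).V), (F i).adj u v ∧ x = ⟨i, u⟩ ∧ y = ⟨i, v⟩))

instance vecConsDecEq (T : Tournament) {m : ℕ} (F : Fin m → Tournament)
    [hT : DecidableEq T.V] [hF : ∀ i, DecidableEq (F i).V] :
    ∀ i, DecidableEq ((Matrix.vecCons T F) i).V :=
  Fin.cases hT hF

instance vecConsDecAdj (T : Tournament) {m : ℕ} (F : Fin m → Tournament)
    [hT : DecidableRel T.adj] [hF : ∀ i, DecidableRel (F i).adj] :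
    ∀ i, DecidableRel ((Matrix.vecCons T F) i).adj :=
  Fin.cases hT hF

instance vecEmptyDecEq : ∀ i : Fin 0, DecidableEq ((Matrix.vecEmpty : Fin 0 → Tournament) i).V :=
  fun i => i.elim0

instance vecEmptyDecAdj :
    ∀ i : Fin 0, DecidableRel ((Matrix.vecEmpty : Fin 0 → Tournament) i).adj :=
  fun i => i.elim0

lemma deltaDir_iff_lt {m : ℕ} {i j : Fin m} (h : ¬(Even i.1 ∧ Even j.1)) :
    deltaDir i j ↔ i < j := by
  unfold deltaDir; tauto

lemma deltaDir_iff_gt {m : ℕ} {i j : Fin m} (hi : Even i.1) (hj : Even j.1) :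
    deltaDir i j ↔ j < i := by
  unfold deltaDir; tauto

section deltaSum

variable {m : ℕ} {F : Fin m → Tournament}

lemma deltaSum_adj_of_fst_ne {x y : (deltaSum F).V} (h : x.1 ≠ y.1) :
    (deltaSum F).adj x y ↔ deltaDir x.1 y.1 := by
  refine ⟨?_, Or.inl⟩
  rintro (hd | ⟨i, u, v, -, rfl, rfl⟩)
  · exact hd
  · exact absurd rfl h

lemma deltaSum_adj_mk_of_ne {i j : Fin m} {u : (F i).V} {v : (F j).V} (h : i ≠ j) :
    (deltaSum F).adj ⟨i, u⟩ ⟨j, v⟩ ↔ deltaDir i j :=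
  deltaSum_adj_of_fst_ne h

lemma deltaSum_adj_mk {i : Fin m} {u v : (F i).V} :
    (deltaSum F).adj ⟨i, u⟩ ⟨i, v⟩ ↔ (F i).adj u v := by
  refine ⟨?_, fun h => Or.inr ⟨i, u, v, h, rfl, rfl⟩⟩
  rintro (hd | ⟨j, p, q, ha, h1, h2⟩)
  · exact absurd hd (deltaDir_irrefl i)
  · cases h1; cases h2; exact ha

end deltaSum

lemma Contains.refl (T : Tournament) : T.Contains T :=
  ⟨id, Function.injective_id, fun _ _ => Iff.rfl⟩

lemma Contains.trans {T S R : Tournament} (h₁ : T.Contains S) (h₂ : S.Contains R) :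
    T.Contains R := by
  obtain ⟨f, hf, hfa⟩ := h₁
  obtain ⟨g, hg, hga⟩ := h₂
  exact ⟨f ∘ g, hf.comp hg, fun u v => (hga u v).trans (hfa _ _)⟩

lemma contains_oneTour (T : Tournament) [Nonempty T.V] : T.Contains oneTour :=
  ⟨fun _ => Classical.arbitrary T.V, fun _ _ _ => Subsingleton.elim _ _,
    fun _ _ => iff_of_false id (T.irrefl _)⟩

lemma not_oneTour_contains {H : Tournament} [Nontrivial H.V] : ¬ oneTour.Contains H := by
  rintro ⟨f, hf, -⟩
  obtain ⟨u, v, huv⟩ := exists_pair_ne H.V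
  exact huv (hf (Subsingleton.elim _ _))

lemma contains_linTour_two {T : Tournament} {a b : T.V} (h : T.adj a b) :
    T.Contains (linTour 2) := by
  have hab : a ≠ b := fun e => T.irrefl a (e ▸ h)
  refine ⟨![a, b], ?_, ?_⟩
  · intro u v huv
    fin_cases u <;> fin_cases v <;> first | rfl | simp_all [eq_comm]
  · intro u v
    fin_cases u <;> fin_cases v <;> simp [linTour, h, T.irrefl, T.asymm a b h]

lemma deltaSum_contains_deltaSum {m : ℕ} {F G : Fin m → Tournament}
    (h : ∀ i, (F i).Contains (G i)) : (deltaSum F).Contains (deltaSum G) := by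
  choose e he ha using h
  refine ⟨fun x => ⟨x.1, e x.1 x.2⟩, ?_, ?_⟩
  · rintro ⟨i, u⟩ ⟨j, v⟩ huv
    obtain ⟨rfl, huv⟩ := Sigma.mk.inj_iff.1 huv
    exact Sigma.ext rfl (heq_of_eq (he i (eq_of_heq huv)))
  · rintro ⟨i, u⟩ ⟨j, v⟩
    by_cases hij : i = j
    · subst hij
      exact deltaSum_adj_mk.trans ((ha i u v).trans deltaSum_adj_mk.symm)
    · exact (deltaSum_adj_mk_of_ne hij).trans (deltaSum_adj_mk_of_ne hij).symm

lemma contains_of_forall_fst_eq {m : ℕ} {F : Fin m → Tournament} {H : Tournament}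
    {f : H.V → (deltaSum F).V} (hf : Function.Injective f)
    (hadj : ∀ u v, H.adj u v ↔ (deltaSum F).adj (f u) (f v)) {t : Fin m}
    (ht : ∀ v, (f v).1 = t) : (F t).Contains H := by
  have hmk : ∀ (x : (deltaSum F).V) (hx : x.1 = t), x = ⟨t, hx ▸ x.2⟩ := by
    rintro ⟨i, u⟩ rfl; rfl
  obtain ⟨g, rfl⟩ : ∃ g : H.V → (F t).V, f = fun v => ⟨t, g v⟩ :=
    ⟨fun v => ht v ▸ (f v).2, funext fun v => hmk (f v) (ht v)⟩
  exact ⟨g, fun u v huv => hf (congrArg (Sigma.mk t) huv),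
    fun u v => (hadj u v).trans deltaSum_adj_mk⟩

instance atour_nonempty : ∀ n, Nonempty (Atour n).V
  | 0 | 1 => ⟨()⟩
  | n + 2 => by
    have := atour_nonempty (n + 1)
    exact ⟨⟨⟨0, by omega⟩, by dsimp only; split_ifs <;> exact Classical.arbitrary _⟩⟩

def IsReducible (H : Tournament) : Prop :=
  ∃ A : Finset H.V, A.Nonempty ∧ (∃ b, b ∉ A) ∧ ∀ x ∈ A, ∀ y ∉ A, H.adj x y

/-- `S` behaves like the set of vertices that an embedding into some `A_n` places in
single-vertex parts. -/
def IsDeltaSkeleton (H : Tournament) (S : Finset H.V) : Prop :=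
  ∀ a b c, H.adj a b → H.adj b c →
    (a ∈ S → b ∈ S → c ∈ S → H.adj a c) ∧
    (a ∈ S → b ∉ S → c ∈ S → H.adj c a) ∧
    (a ∉ S → b ∈ S → c ∉ S → H.adj a c)

def HasDeltaSkeleton (H : Tournament) : Prop :=
  ∃ S : Finset H.V, 1 < S.card ∧ IsDeltaSkeleton H S

instance {H : Tournament} [DecidableEq H.V] [DecidableRel H.adj] :
    Decidable (IsReducible H) := by
  unfold IsReducible; infer_instance

set_option synthInstance.maxSize 200 in
instance {H : Tournament} [DecidableEq H.V] [DecidableRel H.adj] (S : Finset H.V) :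
    Decidable (IsDeltaSkeleton H S) := by
  unfold IsDeltaSkeleton; infer_instance

instance {H : Tournament} [DecidableEq H.V] [DecidableRel H.adj] :
    Decidable (HasDeltaSkeleton H) := by
  unfold HasDeltaSkeleton; infer_instance

def IsDeltaLabelling (H : Tournament) {m : ℕ} (π : H.V → Fin m) : Prop :=
  ∀ u v, π u ≠ π v → (H.adj u v ↔ deltaDir (π u) (π v))

namespace IsDeltaLabelling

variable {H : Tournament} {m : ℕ} {π : H.V → Fin m}

lemma adj_iff_lt (hπ : IsDeltaLabelling H π) {u v : H.V} (hne : π u ≠ π v)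
    (h : ¬(Even (π u).1 ∧ Even (π v).1)) : H.adj u v ↔ π u < π v :=
  (hπ u v hne).trans (deltaDir_iff_lt h)

lemma adj_iff_gt (hπ : IsDeltaLabelling H π) {u v : H.V} (hne : π u ≠ π v)
    (hu : Even (π u).1) (hv : Even (π v).1) : H.adj u v ↔ π v < π u :=
  (hπ u v hne).trans (deltaDir_iff_gt hu hv)

lemma isReducible (hπ : IsDeltaLabelling H π) {a b : H.V} (hab : π a < π b)
    (hS : ∀ u v, Even (π u).1 → Even (π v).1 → u = v) : IsReducible H := by
  refine ⟨Finset.univ.filter fun v => π v ≤ π a, ⟨a, by simp⟩, ⟨b, by simpa using hab⟩,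
    fun x hx y hy => ?_⟩
  simp only [Finset.mem_filter, Finset.mem_univ, true_and, not_le] at hx hy
  have hxy : π x < π y := hx.trans_lt hy
  exact (hπ.adj_iff_lt hxy.ne fun h => hxy.ne (congrArg π (hS x y h.1 h.2))).2 hxy

lemma isDeltaSkeleton (hπ : IsDeltaLabelling H π)
    (hsingle : ∀ u v, Even (π u).1 → π u = π v → u = v) :
    IsDeltaSkeleton H (Finset.univ.filter fun v => Even (π v).1) := by
  have hne : ∀ u v, H.adj u v → Even (π u).1 ∨ Even (π v).1 → π u ≠ π v := by
    rintro u v huv (hu | hv) he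
    · exact H.irrefl u (hsingle u v hu he ▸ huv)
    · exact H.irrefl v (hsingle v u hv he.symm ▸ huv)
  intro x y z hxy hyz
  simp only [Finset.mem_filter, Finset.mem_univ, true_and]
  refine ⟨fun hx hy hz => ?_, fun hx hy hz => ?_, fun hx hy hz => ?_⟩
  · have hyx := (hπ.adj_iff_gt (hne x y hxy (.inl hx)) hx hy).1 hxy
    have hzy := (hπ.adj_iff_gt (hne y z hyz (.inl hy)) hy hz).1 hyz
    exact (hπ.adj_iff_gt (hzy.trans hyx).ne' hx hz).2 (hzy.trans hyx)
  · have hxy' := (hπ.adj_iff_lt (hne x y hxy (.inl hx)) fun h => hy h.2).1 hxy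
    have hyz' := (hπ.adj_iff_lt (hne y z hyz (.inr hz)) fun h => hy h.1).1 hyz
    exact (hπ.adj_iff_gt (hxy'.trans hyz').ne' hz hx).2 (hxy'.trans hyz')
  · have hxy' := (hπ.adj_iff_lt (hne x y hxy (.inr hy)) fun h => hx h.1).1 hxy
    have hyz' := (hπ.adj_iff_lt (hne y z hyz (.inl hy)) fun h => hz h.2).1 hyz
    exact (hπ.adj_iff_lt (hxy'.trans hyz').ne fun h => hx h.1).2 (hxy'.trans hyz')

end IsDeltaLabelling

lemma isDeltaLabelling_fst {m : ℕ} {F : Fin m → Tournament} {H : Tournament}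
    {f : H.V → (deltaSum F).V} (hadj : ∀ u v, H.adj u v ↔ (deltaSum F).adj (f u) (f v)) :
    IsDeltaLabelling H fun v => (f v).1 :=
  fun u v h => (hadj u v).trans (deltaSum_adj_of_fst_ne h)

lemma exists_part_contains_of_deltaSum_contains {m : ℕ} {F : Fin m → Tournament}
    (hF : ∀ t, Even t.1 → Subsingleton (F t).V) {H : Tournament} [Nontrivial H.V]
    (hred : ¬ IsReducible H) (hskel : ¬ HasDeltaSkeleton H) (hH : (deltaSum F).Contains H) :
    ∃ t, ¬ Even t.1 ∧ (F t).Contains H := by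
  obtain ⟨f, hf, hadj⟩ := hH
  set π := fun v => (f v).1
  have hπ : IsDeltaLabelling H π := isDeltaLabelling_fst hadj
  have hsingle : ∀ u v, Even (π u).1 → π u = π v → u = v := fun u v he huv =>
    have := hF _ he
    hf (Sigma.ext huv (Subsingleton.helim (congrArg (fun t => (F t).V) huv) _ _))
  by_cases hconst : ∃ t, ∀ v, π v = t
  · obtain ⟨t, ht⟩ := hconst
    refine ⟨t, fun he => ?_, contains_of_forall_fst_eq hf hadj ht⟩
    obtain ⟨u, v, huv⟩ := exists_pair_ne H.V
    exact huv (hsingle u v (ht u ▸ he) ((ht u).trans (ht v).symm))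
  obtain ⟨a, b, hab⟩ : ∃ a b, π a < π b := by
    push Not at hconst
    obtain ⟨a, ha⟩ := hconst (π (Classical.arbitrary H.V))
    rcases lt_or_gt_of_ne ha with h | h
    exacts [⟨_, _, h⟩, ⟨_, _, h⟩]
  by_cases hS : ∀ u v, Even (π u).1 → Even (π v).1 → u = v
  · exact absurd (hπ.isReducible hab hS) hred
  · push Not at hS
    obtain ⟨u, v, hu, hv, huv⟩ := hS
    refine absurd ⟨_, Finset.one_lt_card.2 ⟨u, ?_, v, ?_, huv⟩, hπ.isDeltaSkeleton hsingle⟩ hskel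
      <;> simpa

theorem not_atour_contains {H : Tournament} [Nontrivial H.V] (hred : ¬ IsReducible H)
    (hskel : ¬ HasDeltaSkeleton H) : ∀ n, ¬ (Atour n).Contains H
  | 0 | 1 => not_oneTour_contains
  | n + 2 => fun hH => by
    have hF (t : Fin (2 * (n + 2) - 1)) (ht : Even t.1) :
        Subsingleton (if Even t.1 then oneTour else Atour (n + 1)).V := by
      rw [if_pos ht]; infer_instance
    obtain ⟨t, ht, htH⟩ := exists_part_contains_of_deltaSum_contains hF hred hskel hH
    rw [if_neg ht] at htH
    exact not_atour_contains hred hskel (n + 1) htH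

lemma atour_contains_deltaSum {n : ℕ} {G : Fin (2 * (n + 2) - 1) → Tournament}
    (heven : ∀ t, Even t.1 → oneTour.Contains (G t))
    (hodd : ∀ t, ¬ Even t.1 → (Atour (n + 1)).Contains (G t)) :
    (Atour (n + 2)).Contains (deltaSum G) :=
  deltaSum_contains_deltaSum fun t => by
    by_cases ht : Even t.1
    · simpa only [ht, if_true] using heven t ht
    · simpa only [ht, if_false] using hodd t ht

lemma atour_contains_utour (n : ℕ) : (Atour (n + 2)).Contains (Utour (n + 2)) :=
  atour_contains_deltaSum (fun _ _ => Contains.refl oneTour) fun _ _ => contains_oneTour _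

def u4Blowup : Tournament :=
  deltaSum ![oneTour, oneTour, oneTour, linTour 2, oneTour, oneTour, oneTour]

lemma atour_four_contains_u4Blowup : (Atour 4).Contains u4Blowup := by
  have hL2 : (Atour 3).Contains (linTour 2) := (atour_contains_utour 1).trans
    (contains_linTour_two (a := ⟨0, ()⟩) (b := ⟨1, ()⟩) (.inl (by decide)))
  refine atour_contains_deltaSum (fun t ht => ?_) fun t ht => ?_ <;> fin_cases t
  all_goals first
    | exact absurd ht (by decide)
    | exact Contains.refl oneTour
    | exact contains_oneTour _
    | exact hL2

set_option synthInstance.maxSize 1000 in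
instance : DecidableEq u4Blowup.V :=
  inferInstanceAs
    (DecidableEq (deltaSum ![oneTour, oneTour, oneTour, linTour 2, oneTour, oneTour, oneTour]).V)
set_option synthInstance.maxSize 2000 in
instance : DecidableRel u4Blowup.adj :=
  inferInstanceAs
    (DecidableRel (deltaSum ![oneTour, oneTour, oneTour, linTour 2, oneTour, oneTour, oneTour]).adj)
instance : DecidableEq delta2.V :=
  inferInstanceAs (DecidableEq (deltaSum ![linTour 2, linTour 2, linTour 2]).V)
instance : DecidableRel delta2.adj :=
  inferInstanceAs (DecidableRel (deltaSum ![linTour 2, linTour 2, linTour 2]).adj)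

def delta2ToU4Blowup : delta2.V → u4Blowup.V
  | ⟨0, u⟩ => ![⟨6, ()⟩, ⟨4, ()⟩] u
  | ⟨1, u⟩ => ![⟨2, ()⟩, ⟨0, ()⟩] u
  | ⟨2, u⟩ => ⟨3, u⟩

lemma u4Blowup_contains_delta2 : u4Blowup.Contains delta2 :=
  ⟨delta2ToU4Blowup, by decide, by decide⟩

def d3OnFin7 : Tournament where
  V := Fin 7
  adj i j :=
    ![![false, true, true, true, false, false, false],
      ![false, false, true, false, true, true, true],
      ![false, false, false, true, true, true, true],
      ![false, true, false, false, true, true, true],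
      ![true, false, false, false, false, true, false],
      ![true, false, false, false, false, false, true],
      ![true, false, false, false, true, false, false]] i j = true
  irrefl := by decide
  total := by decide
  asymm := by decide

instance : DecidableEq d3OnFin7.V := inferInstanceAs (DecidableEq (Fin 7))
instance : DecidableRel d3OnFin7.adj := fun _ _ => inferInstanceAs (Decidable (_ = true))
instance : Nontrivial d3OnFin7.V := inferInstanceAs (Nontrivial (Fin 7))
instance : DecidableEq Ntour.V := inferInstanceAs (DecidableEq (Fin 5))
instance : DecidableRel Ntour.adj := fun _ _ => inferInstanceAs (Decidable (_ = true))
instance : Nontrivial Ntour.V := inferInstanceAs (Nontrivial (Fin 5))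
instance : DecidableEq Stour3.V := inferInstanceAs (DecidableEq (Fin 5))
instance : DecidableRel Stour3.adj := fun _ _ => inferInstanceAs (Decidable (_ ∨ _))
instance : Nontrivial Stour3.V := inferInstanceAs (Nontrivial (Fin 5))

instance : DecidableEq (Dtour 2).V :=
  inferInstanceAs (DecidableEq (deltaSum ![oneTour, oneTour, oneTour]).V)
instance : DecidableRel (Dtour 2).adj :=
  inferInstanceAs (DecidableRel (deltaSum ![oneTour, oneTour, oneTour]).adj)
instance : DecidableEq (Dtour 3).V :=
  inferInstanceAs (DecidableEq (deltaSum ![oneTour, Dtour 2, Dtour 2]).V)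
instance : DecidableRel (Dtour 3).adj :=
  inferInstanceAs (DecidableRel (deltaSum ![oneTour, Dtour 2, Dtour 2]).adj)

def d3OnFin7ToDtour3 : d3OnFin7.V → (Dtour 3).V :=
  ![⟨0, ()⟩, ⟨1, ⟨0, ()⟩⟩, ⟨1, ⟨1, ()⟩⟩, ⟨1, ⟨2, ()⟩⟩, ⟨2, ⟨0, ()⟩⟩, ⟨2, ⟨1, ()⟩⟩, ⟨2, ⟨2, ()⟩⟩]

lemma dtour3_contains_d3OnFin7 : (Dtour 3).Contains d3OnFin7 :=
  ⟨d3OnFin7ToDtour3, by decide, by decide⟩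

set_option maxRecDepth 2000 in
lemma not_atour_contains_d3OnFin7 (n : ℕ) : ¬ (Atour n).Contains d3OnFin7 :=
  not_atour_contains (by decide) (by decide) n

lemma not_atour_contains_ntour (n : ℕ) : ¬ (Atour n).Contains Ntour :=
  not_atour_contains (by decide) (by decide) n

lemma not_atour_contains_stour3 (n : ℕ) : ¬ (Atour n).Contains Stour3 :=
  not_atour_contains (by decide) (by decide) n

end Tournament

open Tournament in
/-- `𝒜` contains `U₃` and `Δ₂`, but contains none of `D₃`, `N`,
`S₃`. -/
theorem classA_contents :
    Utour 3 ∈ classA ∧ delta2 ∈ classA ∧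
      Dtour 3 ∉ classA ∧ Ntour ∉ classA ∧ Stour3 ∉ classA := by
  refine ⟨⟨3, by norm_num, atour_contains_utour 1⟩,
    ⟨4, by norm_num, atour_four_contains_u4Blowup.trans u4Blowup_contains_delta2⟩,
    fun ⟨n, _, h⟩ => not_atour_contains_d3OnFin7 n (h.trans dtour3_contains_d3OnFin7),
    fun ⟨n, _, h⟩ => not_atour_contains_ntour n h,
    fun ⟨n, _, h⟩ => not_atour_contains_stour3 n h⟩
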